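/- arXiv:math/0607615 — 4 statements merged into one kernel-verified Lean document; each statement's English description precedes it below -/
import Mathlib

section
/- The polynomial f := XYZ - ZYX in ℝ⟨X,Y,Z⟩ satisfies tr(f(A,B,C)) = 0 for all d ∈ ℕ and all symmetric matrices A,B,C ∈ ℝ^{d×d}, yet f is not cyclically equivalent to 0 (i.e., f is not a sum of commutators). -/
abbrev NCPoly (k : Type) [CommSemiring k] (n : ℕ) := MonoidAlgebra k (FreeMonoid (Fin n))

noncomputable def ncWord (k : Type) [CommSemiring k] {n : ℕ} (w : FreeMonoid (Fin n)) : NCPoly k n :=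
  MonoidAlgebra.of k (FreeMonoid (Fin n)) w

noncomputable def ncX (k : Type) [CommSemiring k] {n : ℕ} (i : Fin n) : NCPoly k n :=
  ncWord k (FreeMonoid.of i)

/-- The involution on `k⟨X⟩` fixing the variables and conjugating coefficients. -/
noncomputable def ncStar {k : Type} [CommSemiring k] [StarRing k] {n : ℕ} (f : NCPoly k n) : NCPoly k n :=
  MonoidAlgebra.ofCoeff (Finsupp.mapDomain FreeMonoid.reverse (Finsupp.mapRange star (star_zero k) f.coeff))

/-- `f` and `g` are cyclically equivalent: `f - g` is a sum of commutators. -/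
def IsCyclicEquiv {k : Type} [CommRing k] {n : ℕ} (f g : NCPoly k n) : Prop :=
  f - g ∈ AddSubmonoid.closure {x : NCPoly k n | ∃ p q, x = p * q - q * p}

/-- The quadratic module generated by the `1 - X_i^2`: all finite sums of
elements `g* g` and `g* (1 - X_i^2) g`. -/
noncomputable def QuadMod (k : Type) [CommRing k] [StarRing k] (n : ℕ) : AddSubmonoid (NCPoly k n) :=
  AddSubmonoid.closure
    ({x | ∃ g : NCPoly k n, x = ncStar g * g} ∪
     {x | ∃ (g : NCPoly k n) (i : Fin n), x = ncStar g * (1 - (ncX k i) ^ 2) * g})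

/-- Evaluation of a noncommutative polynomial at a tuple of matrices. -/
noncomputable def ncEval {k : Type} [CommRing k] {n s : ℕ}
    (A : Fin n → Matrix (Fin s) (Fin s) k) :
    NCPoly k n →ₐ[k] Matrix (Fin s) (Fin s) k :=
  MonoidAlgebra.lift k (Matrix (Fin s) (Fin s) k) (FreeMonoid (Fin n)) (FreeMonoid.lift A)

/-- A self-adjoint contraction matrix: `A* = A` and `1 - A²` positive semidefinite. -/
def IsSAContraction {k : Type} [CommRing k] [StarRing k] [PartialOrder k] [StarOrderedRing k]
    {s : ℕ} (A : Matrix (Fin s) (Fin s) k) : Prop :=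
  A.IsHermitian ∧ (1 - A * A).PosSemidef

noncomputable def fXYZ : NCPoly ℝ 3 :=
  ncX ℝ 0 * ncX ℝ 1 * ncX ℝ 2 - ncX ℝ 2 * ncX ℝ 1 * ncX ℝ 0

/-!
Transposition reverses products and preserves the trace, so on symmetric matrices
`tr(ABC) = tr((ABC)ᵀ) = tr(CBA)`. On the other hand the trace of a matrix evaluation kills
every commutator, hence every polynomial cyclically equivalent to `0`; but at the
matrix units `A = E₁₂`, `B = E₂₁`, `C = E₁₁` one gets `ABC = E₁₁` and `CBA = 0`,
so `tr f(A, B, C) = 1`.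
-/

open Matrix

lemma ncEval_ncX {k : Type} [CommRing k] {n s : ℕ} (A : Fin n → Matrix (Fin s) (Fin s) k)
    (i : Fin n) : ncEval A (ncX k i) = A i := by
  simp [ncEval, ncX, ncWord]

lemma ncEval_fXYZ {s : ℕ} (A B C : Matrix (Fin s) (Fin s) ℝ) :
    ncEval ![A, B, C] fXYZ = A * B * C - C * B * A := by
  simp [fXYZ, ncEval_ncX]

lemma Matrix.trace_mul_mul_eq_trace_mul_mul_of_isSymm {ι R : Type*} [Fintype ι]
    [CommSemiring R] {A B C : Matrix ι ι R} (hA : A.IsSymm) (hB : B.IsSymm) (hC : C.IsSymm) :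
    trace (A * B * C) = trace (C * B * A) := by
  rw [← trace_transpose, transpose_mul, transpose_mul, hA.eq, hB.eq, hC.eq, Matrix.mul_assoc]

lemma trace_ncEval_eq_zero_of_isCyclicEquiv_zero {k : Type} [CommRing k] {n s : ℕ}
    {f : NCPoly k n} (hf : IsCyclicEquiv f 0) (A : Fin n → Matrix (Fin s) (Fin s) k) :
    trace (ncEval A f) = 0 := by
  rw [IsCyclicEquiv, sub_zero] at hf
  induction hf using AddSubmonoid.closure_induction with
  | mem x hx =>
    obtain ⟨p, q, rfl⟩ := hx
    rw [map_sub, map_mul, map_mul, trace_sub, trace_mul_comm, sub_self]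
  | zero => simp
  | add x y _ _ hx hy => rw [map_add, trace_add, hx, hy, add_zero]

lemma trace_ncEval_fXYZ_matrixUnits :
    trace (ncEval ![!![0, 1; 0, 0], !![0, 0; 1, 0], !![1, 0; 0, 0]] fXYZ) = 1 := by
  simp [ncEval_fXYZ, trace_fin_two]

theorem stmt2 :
    (∀ (d : ℕ) (A B C : Matrix (Fin d) (Fin d) ℝ),
        A.IsHermitian → B.IsHermitian → C.IsHermitian →
        Matrix.trace (ncEval ![A, B, C] fXYZ) = 0) ∧
    ¬ IsCyclicEquiv fXYZ 0 := by
  constructor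
  · intro d A B C hA hB hC
    rw [isHermitian_iff_isSymm] at hA hB hC
    rw [ncEval_fXYZ, trace_sub, trace_mul_mul_eq_trace_mul_mul_of_isSymm hA hB hC, sub_self]
  · intro h
    have htrace := trace_ncEval_eq_zero_of_isCyclicEquiv_zero h
      ![!![0, 1; 0, 0], !![0, 0; 1, 0], !![1, 0; 0, 0]]
    rw [trace_ncEval_fXYZ_matrixUnits] at htrace
    exact one_ne_zero htrace
end

section
/- Let R be a ring with involution * and M ⊆ Sym R a quadratic module. Then the set H(M) := {g ∈ R : N - g*g ∈ M for some N ∈ ℕ} is closed under multiplication; more precisely, H(M) is a *-subring of R containing all elements g with N - g*g ∈ M. -/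
/-- A quadratic module in a ring with involution. -/
def IsQuadraticModule {R : Type} [Ring R] [StarRing R] (M : Set R) : Prop :=
  (∀ a ∈ M, star a = a) ∧ (1 : R) ∈ M ∧ (∀ a ∈ M, ∀ b ∈ M, a + b ∈ M) ∧
    ∀ (g : R), ∀ a ∈ M, star g * a * g ∈ M

/-- The ring of bounded elements `H(M)`. -/
def boundedElts {R : Type} [Ring R] [StarRing R] (M : Set R) : Set R :=
  {g | ∃ N : ℕ, (N : R) - star g * g ∈ M}

/-!
For each closure property, `N' - x* x` for the new element `x` is an explicit sum of elements of `M`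
built from the witnesses of the old ones. The only non-obvious case is `g*`: the identity
`(N+1)² - g g* = g (N+1 - g*g) g* + (N+1 - g g*)² + N g g*`
needs the witness raised from `N` to `N + 1`, so that the leftover multiple of `g g*` has a
nonnegative coefficient.
-/

namespace IsQuadraticModule

variable {R : Type} [Ring R] [StarRing R] {M : Set R}

theorem add_mem (hM : IsQuadraticModule M) {a b : R} (ha : a ∈ M) (hb : b ∈ M) : a + b ∈ M :=
  hM.2.2.1 a ha b hb

theorem star_mul_mul_mem (hM : IsQuadraticModule M) (g : R) {a : R} (ha : a ∈ M) :
    star g * a * g ∈ M :=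
  hM.2.2.2 g a ha

theorem one_mem (hM : IsQuadraticModule M) : (1 : R) ∈ M := hM.2.1

theorem star_mul_self_mem (hM : IsQuadraticModule M) (g : R) : star g * g ∈ M := by
  simpa using hM.star_mul_mul_mem g hM.one_mem

theorem zero_mem (hM : IsQuadraticModule M) : (0 : R) ∈ M := by
  simpa using hM.star_mul_self_mem 0

theorem nsmul_mem (hM : IsQuadraticModule M) {a : R} (ha : a ∈ M) (n : ℕ) : n • a ∈ M := by
  induction n with
  | zero => simpa using hM.zero_mem
  | succ n ih => rw [succ_nsmul]; exact hM.add_mem ih ha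

theorem natCast_mul_mem (hM : IsQuadraticModule M) {a : R} (ha : a ∈ M) (n : ℕ) :
    (n : R) * a ∈ M := by
  simpa [nsmul_eq_mul] using hM.nsmul_mem ha n

theorem natCast_succ_sub_mem (hM : IsQuadraticModule M) {N : ℕ} {a : R}
    (ha : (N : R) - a ∈ M) : ((N + 1 : ℕ) : R) - a ∈ M := by
  have h := hM.add_mem ha hM.one_mem
  rwa [sub_add_eq_add_sub, ← Nat.cast_succ] at h

end IsQuadraticModule

section boundedElts

variable {R : Type} [Ring R] [StarRing R] {M : Set R}

theorem zero_mem_boundedElts (hM : IsQuadraticModule M) : (0 : R) ∈ boundedElts M :=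
  ⟨1, by simpa using hM.one_mem⟩

theorem one_mem_boundedElts (hM : IsQuadraticModule M) : (1 : R) ∈ boundedElts M :=
  ⟨2, by simpa [one_add_one_eq_two.symm] using hM.one_mem⟩

theorem neg_mem_boundedElts {g : R} (hg : g ∈ boundedElts M) : -g ∈ boundedElts M := by
  obtain ⟨N, hN⟩ := hg
  exact ⟨N, by simpa using hN⟩

theorem add_mem_boundedElts (hM : IsQuadraticModule M) {g h : R} (hg : g ∈ boundedElts M)
    (hh : h ∈ boundedElts M) : g + h ∈ boundedElts M := by
  obtain ⟨N, hN⟩ := hg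
  obtain ⟨N', hN'⟩ := hh
  have hsum := hM.add_mem hN hN'
  refine ⟨2 * (N + N'), ?_⟩
  have parallelogram : ((2 * (N + N') : ℕ) : R) - star (g + h) * (g + h) =
      ((N - star g * g) + (N' - star h * h)) + ((N - star g * g) + (N' - star h * h)) +
        star (g - h) * (g - h) := by
    simp only [star_add, star_sub]
    push_cast
    noncomm_ring
  rw [parallelogram]
  exact hM.add_mem (hM.add_mem hsum hsum) (hM.star_mul_self_mem _)

theorem mul_mem_boundedElts (hM : IsQuadraticModule M) {g h : R} (hg : g ∈ boundedElts M)
    (hh : h ∈ boundedElts M) : g * h ∈ boundedElts M := by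
  obtain ⟨N, hN⟩ := hg
  obtain ⟨N', hN'⟩ := hh
  refine ⟨N * N', ?_⟩
  have decomposition : ((N * N' : ℕ) : R) - star (g * h) * (g * h) =
      N * (N' - star h * h) + star h * (N - star g * g) * h := by
    simp only [star_mul, Nat.cast_mul, mul_sub, sub_mul, mul_assoc,
      ← (Nat.cast_commute N (star h)).eq]
    abel
  rw [decomposition]
  exact hM.add_mem (hM.natCast_mul_mem hN' N) (hM.star_mul_mul_mem h hN)

theorem star_mem_boundedElts (hM : IsQuadraticModule M) {g : R} (hg : g ∈ boundedElts M) :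
    star g ∈ boundedElts M := by
  obtain ⟨N, hN⟩ := hg
  have hN1 := hM.natCast_succ_sub_mem hN
  refine ⟨(N + 1) * (N + 1), ?_⟩
  have decomposition : (((N + 1) * (N + 1) : ℕ) : R) - star (star g) * star g =
      star (star g) * ((N + 1 : ℕ) - star g * g) * star g +
        star ((N + 1 : ℕ) - g * star g) * ((N + 1 : ℕ) - g * star g) +
        N * (g * star g) := by
    simp only [star_sub, star_mul, star_natCast, star_star]
    push_cast
    simp only [mul_sub, sub_mul, add_mul, mul_add, ← mul_assoc, (Nat.cast_commute N g).eq,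
      one_mul, mul_one]
    simp only [mul_assoc, ← (Nat.cast_commute N (star g)).eq]
    abel
  rw [decomposition]
  refine hM.add_mem (hM.add_mem (hM.star_mul_mul_mem _ hN1) (hM.star_mul_self_mem _)) ?_
  simpa using hM.natCast_mul_mem (hM.star_mul_self_mem (star g)) N

end boundedElts

theorem stmt5 {R : Type} [Ring R] [StarRing R] (M : Set R) (hM : IsQuadraticModule M) :
    (0 : R) ∈ boundedElts M ∧ (1 : R) ∈ boundedElts M ∧
    (∀ g ∈ boundedElts M, -g ∈ boundedElts M ∧ star g ∈ boundedElts M) ∧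
    (∀ g ∈ boundedElts M, ∀ h ∈ boundedElts M,
      g + h ∈ boundedElts M ∧ g * h ∈ boundedElts M) :=
  ⟨zero_mem_boundedElts hM, one_mem_boundedElts hM,
    fun _ hg => ⟨neg_mem_boundedElts hg, star_mem_boundedElts hM hg⟩,
    fun _ hg _ hh => ⟨add_mem_boundedElts hM hg hh, mul_mem_boundedElts hM hg hh⟩⟩
end

section
/- Let φ : k⟨X⟩ → k (k = ℝ or ℂ) be a linear map with φ(pq) = φ(qp) for all p,q, φ(1) = 1, φ(f*) = φ(f)*, and φ(M_k) ⊆ ℝ_{≥0}, where M_k is the quadratic module generated by 1 - X_1^2,...,1 - X_n^2. Then |φ(w)| ≤ 1 for every word w and φ(f*f) ≥ 0 for all f ∈ k⟨X⟩. -/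
section NCWord

variable {k : Type} [CommSemiring k] {n : ℕ}

theorem ncWord_one : ncWord k (1 : FreeMonoid (Fin n)) = 1 := map_one _

theorem ncWord_mul (v w : FreeMonoid (Fin n)) : ncWord k (v * w) = ncWord k v * ncWord k w :=
  map_mul _ _ _

end NCWord

section NCStar

variable {k : Type} [CommRing k] [StarRing k] {n : ℕ}

noncomputable def ncStarAddHom : NCPoly k n →+ NCPoly k n :=
  MonoidAlgebra.coeffAddEquiv.symm.toAddMonoidHom.comp
    ((Finsupp.mapDomain.addMonoidHom FreeMonoid.reverse).comp
      ((Finsupp.mapRange.addMonoidHom (starAddEquiv (R := k)).toAddMonoidHom).comp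
        MonoidAlgebra.coeffAddEquiv.toAddMonoidHom))

theorem ncStar_zero : ncStar (0 : NCPoly k n) = 0 := map_zero ncStarAddHom

theorem ncStar_add (f g : NCPoly k n) : ncStar (f + g) = ncStar f + ncStar g :=
  map_add ncStarAddHom f g

theorem ncStar_sub (f g : NCPoly k n) : ncStar (f - g) = ncStar f - ncStar g :=
  map_sub ncStarAddHom f g

theorem ncStar_single (w : FreeMonoid (Fin n)) (c : k) :
    ncStar (MonoidAlgebra.single w c) = MonoidAlgebra.single w.reverse (star c) := by
  simp [ncStar, MonoidAlgebra.coeff_single, Finsupp.mapRange_single, Finsupp.mapDomain_single,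
    MonoidAlgebra.ofCoeff_single]

theorem ncStar_ncWord (w : FreeMonoid (Fin n)) : ncStar (ncWord k w) = ncWord k w.reverse := by
  rw [ncWord, MonoidAlgebra.of_apply, ncStar_single, star_one]; rfl

theorem ncStar_algebraMap (c : k) :
    ncStar (algebraMap k (NCPoly k n) c) = algebraMap k (NCPoly k n) (star c) :=
  ncStar_single 1 c

theorem ncStar_one : ncStar (1 : NCPoly k n) = 1 := by
  rw [← map_one (algebraMap k (NCPoly k n)), ncStar_algebraMap, star_one]

theorem ncStar_ncX (i : Fin n) : ncStar (ncX k i) = ncX k i :=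
  ncStar_ncWord _

theorem ncStar_mul (f g : NCPoly k n) : ncStar (f * g) = ncStar g * ncStar f := by
  induction f using MonoidAlgebra.induction_linear with
  | zero => rw [zero_mul, ncStar_zero, mul_zero]
  | add f f' hf hf' => rw [add_mul, ncStar_add, hf, hf', ncStar_add, mul_add]
  | single a b =>
    induction g using MonoidAlgebra.induction_linear with
    | zero => rw [mul_zero, ncStar_zero, zero_mul]
    | add g g' hg hg' => rw [mul_add, ncStar_add, hg, hg', ncStar_add, add_mul]
    | single a' b' =>
      rw [MonoidAlgebra.single_mul_single, ncStar_single, ncStar_single, ncStar_single,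
        MonoidAlgebra.single_mul_single, FreeMonoid.reverse_mul, star_mul', mul_comm (star b')]

theorem ncStar_smul (c : k) (f : NCPoly k n) : ncStar (c • f) = star c • ncStar f := by
  rw [Algebra.smul_def, Algebra.smul_def, ncStar_mul, ncStar_algebraMap, Algebra.commutes]

theorem ncStar_mul_self_mem_quadMod (g : NCPoly k n) : ncStar g * g ∈ QuadMod k n :=
  AddSubmonoid.subset_closure (Or.inl ⟨g, rfl⟩)

theorem one_sub_ncStar_ncWord_mul_self_mem_quadMod (w : FreeMonoid (Fin n)) :
    1 - ncStar (ncWord k w) * ncWord k w ∈ QuadMod k n := by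
  induction w using FreeMonoid.recOn with
  | one => simp [ncWord_one, ncStar_one]
  | of_mul i v ih =>
    have hsplit : 1 - ncStar (ncWord k (FreeMonoid.of i * v)) * ncWord k (FreeMonoid.of i * v)
        = (1 - ncStar (ncWord k v) * ncWord k v)
          + ncStar (ncWord k v) * (1 - ncX k i ^ 2) * ncWord k v := by
      rw [ncWord_mul, ncStar_mul, ← ncX, ncStar_ncX]
      noncomm_ring
    rw [hsplit]
    exact (QuadMod k n).add_mem ih (AddSubmonoid.subset_closure (Or.inr ⟨_, i, rfl⟩))

end NCStar

section CauchySchwarz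

open RCLike

variable {k : Type} [RCLike k] {n : ℕ} {φ : NCPoly k n →ₗ[k] k}

theorem norm_sq_le_re_ncStar_mul_self (h1 : φ 1 = 1)
    (hstar : ∀ f, φ (ncStar f) = star (φ f)) (hpos : ∀ f, 0 ≤ re (φ (ncStar f * f)))
    (g : NCPoly k n) : ‖φ g‖ ^ 2 ≤ re (φ (ncStar g * g)) := by
  have hexpand (c : k) : φ (ncStar (g - c • 1) * (g - c • 1))
      = φ (ncStar g * g) - c * star (φ g) - star c * φ g + star c * c := by
    simp only [ncStar_sub, ncStar_smul, ncStar_one, sub_mul, mul_sub, smul_mul_assoc,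
      mul_smul_comm, mul_one, one_mul, map_sub, map_smul, hstar, h1, smul_eq_mul]
    ring
  have := hpos (g - φ g • 1)
  rw [hexpand, sub_add_cancel, map_sub, star_def, mul_conj, ← ofReal_pow, ofReal_re] at this
  linarith

end CauchySchwarz

theorem stmt9_general {k : Type} [RCLike k] {n : ℕ} (φ : NCPoly k n →ₗ[k] k)
    (h1 : φ 1 = 1)
    (hstar : ∀ f : NCPoly k n, φ (ncStar f) = star (φ f))
    (hM : ∀ a ∈ QuadMod k n, ∃ r : ℝ, 0 ≤ r ∧ φ a = algebraMap ℝ k r) :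
    (∀ w : FreeMonoid (Fin n), ‖φ (ncWord k w)‖ ≤ 1) ∧
    (∀ f : NCPoly k n, ∃ r : ℝ, 0 ≤ r ∧ φ (ncStar f * f) = algebraMap ℝ k r) := by
  have hre (a : NCPoly k n) (ha : a ∈ QuadMod k n) : 0 ≤ RCLike.re (φ a) := by
    obtain ⟨r, hr, hφa⟩ := hM a ha
    simpa [hφa] using hr
  refine ⟨fun w => ?_, fun f => hM _ (ncStar_mul_self_mem_quadMod f)⟩
  have hcs := norm_sq_le_re_ncStar_mul_self h1 hstar
    (fun f => hre _ (ncStar_mul_self_mem_quadMod f)) (ncWord k w)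
  have hcontr := hre _ (one_sub_ncStar_ncWord_mul_self_mem_quadMod w)
  rw [map_sub, h1, map_sub, RCLike.one_re, sub_nonneg] at hcontr
  exact (pow_le_one_iff_of_nonneg (norm_nonneg _) two_ne_zero).mp (hcs.trans hcontr)

theorem stmt9 {k : Type} [RCLike k] {n : ℕ} (φ : NCPoly k n →ₗ[k] k)
    (htr : ∀ p q : NCPoly k n, φ (p * q) = φ (q * p))
    (h1 : φ 1 = 1)
    (hstar : ∀ f : NCPoly k n, φ (ncStar f) = star (φ f))
    (hM : ∀ a ∈ QuadMod k n, ∃ r : ℝ, 0 ≤ r ∧ φ a = algebraMap ℝ k r) :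
    (∀ w : FreeMonoid (Fin n), ‖φ (ncWord k w)‖ ≤ 1) ∧
    (∀ f : NCPoly k n, ∃ r : ℝ, 0 ≤ r ∧ φ (ncStar f * f) = algebraMap ℝ k r) :=
  stmt9_general φ h1 hstar hM
end

section
/- Let f := Y X^4 Y + X Y^4 X - 3 X Y^2 X + 1 ∈ ℝ⟨X,Y⟩ (a noncommutative version of the Motzkin polynomial). Then f is cyclically equivalent to Y(1-X^2)^2 Y + X(1-Y^2)^2 X + (1-X^2)(1-Y^2), i.e., their difference is a sum of commutators in ℝ⟨X,Y⟩. -/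
noncomputable def ncMotzkin : NCPoly ℝ 2 :=
  ncX ℝ 1 * ncX ℝ 0 ^ 4 * ncX ℝ 1 + ncX ℝ 0 * ncX ℝ 1 ^ 4 * ncX ℝ 0
    - 3 * (ncX ℝ 0 * ncX ℝ 1 ^ 2 * ncX ℝ 0) + 1

/-!
Expanding the squares, `f` minus the right-hand side is `2 YX²Y - XY²X - X²Y²`, which is the sum
of the two commutators `[YX, XY]` and `[Y, X²Y]`.
-/

theorem motzkin_sub_eq_add_commutators {R : Type*} [Ring R] (X Y : R) :
    Y * X ^ 4 * Y + X * Y ^ 4 * X - 3 * (X * Y ^ 2 * X) + 1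
        - (Y * (1 - X ^ 2) ^ 2 * Y + X * (1 - Y ^ 2) ^ 2 * X + (1 - X ^ 2) * (1 - Y ^ 2))
      = (Y * X * (X * Y) - X * Y * (Y * X)) + (Y * (X ^ 2 * Y) - X ^ 2 * Y * Y) := by
  noncomm_ring

theorem stmt18 :
    IsCyclicEquiv ncMotzkin
      (ncX ℝ 1 * (1 - ncX ℝ 0 ^ 2) ^ 2 * ncX ℝ 1
        + ncX ℝ 0 * (1 - ncX ℝ 1 ^ 2) ^ 2 * ncX ℝ 0
        + (1 - ncX ℝ 0 ^ 2) * (1 - ncX ℝ 1 ^ 2)) := by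
  rw [IsCyclicEquiv, ncMotzkin, motzkin_sub_eq_add_commutators]
  exact add_mem (AddSubmonoid.subset_closure ⟨_, _, rfl⟩) (AddSubmonoid.subset_closure ⟨_, _, rfl⟩)
end
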